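/- The permutation ξ output by the Deodhar minimal lift procedure (inputs p, Y, w with {w_1,...,w_p} ≤ Y) satisfies: ξW_p = Y, w ≤ ξ in Bruhat order, and for any v ∈ S_n with vW_p = Y and ξ ≰ v, one has w ≰ v. Consequently ξ is the unique minimal element of {v ∈ S_n : vW_p = Y, w ≤ v}. -/

import Mathlib

/-- Dominance order on equal-cardinality finite sets of naturals:
the i-th smallest element of `E` is at most the i-th smallest element of `F`. -/
def Dom (E F : Finset ℕ) : Prop :=
  List.Forall₂ (· ≤ ·) (Finset.sort E (· ≤ ·)) (Finset.sort F (· ≤ ·))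

/-- The k-th smallest element of `E` (1-based), with junk value 0 out of range. -/
def nth (E : Finset ℕ) (k : ℕ) : ℕ := (Finset.sort E (· ≤ ·)).getD (k - 1) 0

/-- The (0-based) level of `e` in `E`: its index in the increasing enumeration. -/
def level (e : ℕ) (E : Finset ℕ) : ℕ := List.idxOf e (Finset.sort E (· ≤ ·))

/-- The Bruhat order, via the tableau criterion, on permutations of `[n] = {1,...,n}`
given in one-line notation as functions `ℕ → ℕ`. -/
def Bruhat (n : ℕ) (v w : ℕ → ℕ) : Prop :=
  ∀ i ≤ n, Dom ((Finset.Icc 1 i).image v) ((Finset.Icc 1 i).image w)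

/-- `MinLift n p Y w ξ` says that `ξ` (in one-line notation, as a function `ℕ → ℕ`) is
produced by the Deodhar minimal lift procedure from inputs `p`, `Y`, `w`:
for `j ≤ p`, `ξ_j` is the least element of `Y \ {ξ_1,...,ξ_{j-1}}` that is `≥ w_j`;
for `p < j ≤ n`, `ξ_j` is the output of the subroutine applied with
`A = {w_1,...,w_{j-1}}`, `B = {ξ_1,...,ξ_{j-1}}`, `γ = w_j` (so `A ∪ {γ} = {w_1,...,w_j}`):
`q` is maximal in `{1,...,j}` with `ã'_q > b̃_{q-1}` (with `b̃_0 = 0`, so `q = 1` qualifies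
vacuously), and `ξ_j = ã'_q`. -/
def MinLift (n p : ℕ) (Y : Finset ℕ) (w ξ : ℕ → ℕ) : Prop :=
  (∀ j, 1 ≤ j → j ≤ p →
    ((Y \ ((Finset.Icc 1 (j - 1)).image ξ)).filter (fun y => w j ≤ y)).min = (ξ j : WithTop ℕ)) ∧
  (∀ j, p < j → j ≤ n → ∃ q, 1 ≤ q ∧ q ≤ j ∧
    (q = 1 ∨ nth ((Finset.Icc 1 j).image w) q > nth ((Finset.Icc 1 (j - 1)).image ξ) (q - 1)) ∧
    (∀ r, q < r → r ≤ j →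
      nth ((Finset.Icc 1 j).image w) r ≤ nth ((Finset.Icc 1 (j - 1)).image ξ) (r - 1)) ∧
    ξ j = nth ((Finset.Icc 1 j).image w) q)

/-!
Compare finite sets of naturals through the counts `countGe E t = #{x ∈ E | t ≤ x}`: for sets of
equal size, the componentwise order of the increasing enumerations (the Gale order, i.e. `Dom`)
is the pointwise order of these counts, and the tableau criterion makes Bruhat order the Gale
order on all prefixes `{v_1, …, v_i}`.

For `j ≤ p` the greedy choice makes `{ξ_1, …, ξ_j}` the Gale-least subset of `Y` lying above
`{w_1, …, w_j}`: if `{w_1, …, w_j} ≤ Z`, removing `w_j` on the left and a suitable `z ≥ w_j` on the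
right reduces to step `j - 1`, and no element of `Y` between `w_j` and `ξ_j` is missed.
For `j > p` the subroutine output satisfies `ξ_j ≤ w_j` and keeps `{w_1, …, w_j} ≤ {ξ_1, …, ξ_j}`;
moreover at every `x ∈ {ξ_1, …, ξ_j} \ Y` both prefixes have equally many elements `≥ x`. So if
`Z ⊇ Y` lies above `{w_1, …, w_j}` and `x` is the least such element `≥ t`, the elements of
`{ξ_1, …, ξ_j}` in `[t, x)` lie in `Y ⊆ Z`, while from `x` on they are as many as those of
`{w_1, …, w_j}`, hence at most as many as those of `Z`.
-/

open Finset

def countGe (E : Finset ℕ) (t : ℕ) : ℕ := (E.filter (t ≤ ·)).card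

def countLt (E : Finset ℕ) (t : ℕ) : ℕ := (E.filter (· < t)).card

def GaleLE (E F : Finset ℕ) : Prop := ∀ t, countGe E t ≤ countGe F t

section Counting

variable {E F : Finset ℕ} {a b t t' : ℕ}

lemma countGe_add_countLt (E : Finset ℕ) (t : ℕ) : countGe E t + countLt E t = E.card := by
  rw [countGe, countLt, ← card_filter_add_card_filter_not (s := E) (t ≤ ·)]
  simp only [not_le]

lemma countGe_anti (E : Finset ℕ) (h : t ≤ t') : countGe E t' ≤ countGe E t :=
  card_le_card (monotone_filter_right E fun _ _ hx => h.trans hx)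

lemma countLt_mono (E : Finset ℕ) (h : t ≤ t') : countLt E t ≤ countLt E t' :=
  card_le_card (monotone_filter_right E fun _ _ hx => lt_of_lt_of_le hx h)

lemma countGe_insert (h : a ∉ E) (t : ℕ) :
    countGe (insert a E) t = countGe E t + if t ≤ a then 1 else 0 := by
  rw [countGe, countGe, filter_insert]
  split_ifs
  · rw [card_insert_of_notMem fun ha => h (mem_of_mem_filter _ ha)]
  · rfl

lemma countLt_insert (h : a ∉ E) (t : ℕ) :
    countLt (insert a E) t = countLt E t + if a < t then 1 else 0 := by
  rw [countLt, countLt, filter_insert]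
  split_ifs
  · rw [card_insert_of_notMem fun ha => h (mem_of_mem_filter _ ha)]
  · rfl

lemma countGe_eq_countGe_succ_add (E : Finset ℕ) (t : ℕ) :
    countGe E t = countGe E (t + 1) + if t ∈ E then 1 else 0 := by
  have hsplit : E.filter (t ≤ ·) = E.filter (t + 1 ≤ ·) ∪ E.filter (· = t) := by
    rw [← filter_or]
    exact filter_congr fun x _ => by omega
  rw [countGe, countGe, hsplit, card_union_of_disjoint, filter_eq']
  · split_ifs <;> simp
  · exact disjoint_filter.2 fun _ _ h h' => by omega

lemma countLt_succ_of_mem (h : a ∈ E) : countLt E (a + 1) = countLt E a + 1 := by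
  have := countGe_eq_countGe_succ_add E a
  have := countGe_add_countLt E a
  have := countGe_add_countLt E (a + 1)
  rw [if_pos h] at *
  omega

lemma countGe_add_countGe_le (htt' : t ≤ t') (h : ∀ x ∈ E, t ≤ x → x < t' → x ∈ F) :
    countGe E t + countGe F t' ≤ countGe F t + countGe E t' := by
  have hsplit : ∀ G : Finset ℕ,
      countGe G t = (G.filter (· ∈ Ico t t')).card + countGe G t' := fun G => by
    rw [countGe, countGe, ← card_union_of_disjoint
      (disjoint_filter.2 fun _ _ h h' => by rw [mem_Ico] at h; omega), ← filter_or]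
    exact congrArg card (filter_congr fun x _ => by rw [mem_Ico]; omega)
  have hmid : (E.filter (· ∈ Ico t t')).card ≤ (F.filter (· ∈ Ico t t')).card :=
    card_le_card fun x hx => by
      rw [mem_filter, mem_Ico] at hx ⊢
      exact ⟨h x hx.1 hx.2.1 hx.2.2, hx.2⟩
  rw [hsplit E, hsplit F]
  omega

lemma countGe_insert_le_insert (ha : a ∉ E) (hb : b ∉ F) (hab : a ≤ b)
    (h : countGe E t ≤ countGe F t) : countGe (insert a E) t ≤ countGe (insert b F) t := by
  rw [countGe_insert ha, countGe_insert hb]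
  split_ifs <;> omega

lemma galeLE_iff_countLt (hcard : E.card = F.card) :
    GaleLE E F ↔ ∀ t, countLt F t ≤ countLt E t :=
  forall_congr' fun t => by
    have := countGe_add_countLt E t
    have := countGe_add_countLt F t
    omega

end Counting

section Enumeration

variable {E F : Finset ℕ} {k t : ℕ}

lemma nth_eq_orderEmbOfFin (h1 : 1 ≤ k) (h2 : k ≤ E.card) :
    nth E k = E.orderEmbOfFin rfl ⟨k - 1, by omega⟩ := by
  rw [nth, orderEmbOfFin_apply, List.getD_eq_getElem _ _ (by rw [length_sort]; omega)]
  rfl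

lemma nth_mem (h1 : 1 ≤ k) (h2 : k ≤ E.card) : nth E k ∈ E := by
  rw [nth_eq_orderEmbOfFin h1 h2]
  exact orderEmbOfFin_mem E rfl _

lemma countLt_orderEmbOfFin (E : Finset ℕ) (i : Fin E.card) :
    countLt E (E.orderEmbOfFin rfl i) = i := by
  set f := E.orderEmbOfFin rfl
  have himage : E.filter (· < f i) = (Iio i).image f := by
    ext x
    simp only [mem_filter, mem_image, mem_Iio]
    constructor
    · rintro ⟨hxE, hlt⟩
      obtain ⟨m, rfl⟩ : x ∈ Set.range f := by rw [range_orderEmbOfFin]; exact hxE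
      exact ⟨m, f.strictMono.lt_iff_lt.1 hlt, rfl⟩
    · rintro ⟨m, hm, rfl⟩
      exact ⟨orderEmbOfFin_mem E rfl m, f.strictMono hm⟩
  rw [countLt, himage, card_image_of_injective _ f.injective, Fin.card_Iio]

lemma countLt_nth (h1 : 1 ≤ k) (h2 : k ≤ E.card) : countLt E (nth E k) = k - 1 := by
  rw [nth_eq_orderEmbOfFin h1 h2, countLt_orderEmbOfFin]

lemma countLt_nth_succ (h1 : 1 ≤ k) (h2 : k ≤ E.card) : countLt E (nth E k + 1) = k := by
  rw [countLt_succ_of_mem (nth_mem h1 h2), countLt_nth h1 h2]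
  omega

lemma nth_lt_iff_le_countLt (h1 : 1 ≤ k) (h2 : k ≤ E.card) : nth E k < t ↔ k ≤ countLt E t := by
  constructor
  · intro h
    rw [← countLt_nth_succ h1 h2]
    exact countLt_mono E h
  · intro h
    by_contra! hle
    have := countLt_mono E hle
    rw [countLt_nth h1 h2] at this
    omega

lemma Dom.card_eq (h : Dom E F) : E.card = F.card := by
  simpa using h.length_eq

lemma nth_eq_getElem_sort {i : ℕ} (h : i < E.card) :
    nth E (i + 1) = (E.sort (· ≤ ·))[i]'(by rwa [length_sort]) := by
  rw [nth, Nat.add_sub_cancel, List.getD_eq_getElem]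

lemma dom_iff_forall_nth_le (hcard : E.card = F.card) :
    Dom E F ↔ ∀ k, 1 ≤ k → k ≤ E.card → nth E k ≤ nth F k := by
  rw [Dom, List.forall₂_iff_get]
  simp only [length_sort, hcard, List.get_eq_getElem, true_and]
  constructor
  · intro h k h1 h2
    obtain ⟨i, rfl⟩ : ∃ i, k = i + 1 := ⟨k - 1, by omega⟩
    rw [nth_eq_getElem_sort (by omega), nth_eq_getElem_sort (by omega)]
    exact h i (by omega) (by omega)
  · intro h i h₁ h₂
    rw [← nth_eq_getElem_sort (by omega), ← nth_eq_getElem_sort h₂]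
    exact h (i + 1) (by omega) (by omega)

lemma forall_nth_le_iff_galeLE (hcard : E.card = F.card) :
    (∀ k, 1 ≤ k → k ≤ E.card → nth E k ≤ nth F k) ↔ GaleLE E F := by
  rw [galeLE_iff_countLt hcard]
  constructor
  · intro h t
    set k := countLt F t
    have hkF : k ≤ F.card := by have := countGe_add_countLt F t; omega
    rcases Nat.eq_zero_or_pos k with hk | hk
    · omega
    have hFt : nth F k < t := (nth_lt_iff_le_countLt hk hkF).2 le_rfl
    exact (nth_lt_iff_le_countLt hk (by omega)).1 ((h k hk (by omega)).trans_lt hFt)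
  · intro h k h1 h2
    by_contra! hlt
    have := (nth_lt_iff_le_countLt h1 (by omega)).1 hlt
    have := h (nth E k)
    rw [countLt_nth h1 h2] at this
    omega

lemma dom_iff_galeLE (hcard : E.card = F.card) : Dom E F ↔ GaleLE E F :=
  (dom_iff_forall_nth_le hcard).trans (forall_nth_le_iff_galeLE hcard)

end Enumeration

section Greedy

variable {Y A B Z : Finset ℕ} {γ y : ℕ}

lemma exists_countGe_eq {s t : ℕ} (hs : 1 ≤ s) (hsZ : s ≤ countGe Z t) :
    ∃ z ∈ Z, t ≤ z ∧ countGe Z z = s := by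
  have hZt := countGe_add_countLt Z t
  set k := Z.card - s + 1
  refine ⟨nth Z k, nth_mem (by omega) (by omega), ?_, ?_⟩
  · by_contra! hlt
    have := (nth_lt_iff_le_countLt (by omega) (by omega)).1 hlt
    omega
  · have := countLt_nth (E := Z) (k := k) (by omega) (by omega)
    have := countGe_add_countLt Z (nth Z k)
    omega

lemma exists_galeLE_erase (hγ : γ ∉ A) (h : GaleLE (insert γ A) Z) :
    ∃ z ∈ Z, γ ≤ z ∧ GaleLE A (Z.erase z) := by
  have hγγ : countGe (insert γ A) γ = countGe (insert γ A) (γ + 1) + 1 := by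
    rw [countGe_eq_countGe_succ_add _ γ, if_pos (mem_insert_self _ _)]
  obtain ⟨z, hzZ, hγz, hz⟩ := exists_countGe_eq (by omega) (h γ)
  refine ⟨z, hzZ, hγz, fun t => ?_⟩
  have hZ := countGe_insert (notMem_erase z Z) t
  rw [insert_erase hzZ] at hZ
  have hA := countGe_insert hγ t
  have := h t
  rcases le_or_gt t γ with htγ | hγt
  · rw [if_pos htγ] at hA
    rw [if_pos (htγ.trans hγz)] at hZ
    omega
  · rw [if_neg (by omega)] at hA
    have := countGe_anti (insert γ A) (show γ + 1 ≤ t by omega)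
    rcases le_or_gt t z with htz | hzt
    · rw [if_pos htz] at hZ
      have := countGe_anti Z htz
      omega
    · rw [if_neg (by omega)] at hZ
      omega

lemma galeLE_insert_of_forall_le (hZY : Z ⊆ Y) (hγ : γ ∉ A) (hyB : y ∉ B)
    (hy : ∀ z ∈ Y, z ∉ B → γ ≤ z → y ≤ z)
    (hB : ∀ Z' ⊆ Y, GaleLE A Z' → GaleLE B Z') (hAZ : GaleLE (insert γ A) Z) :
    GaleLE (insert y B) Z := by
  obtain ⟨z, hzZ, hγz, hAZ'⟩ := exists_galeLE_erase hγ hAZ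
  have hBZ' := hB _ ((erase_subset z Z).trans hZY) hAZ'
  have hZ : ∀ s, countGe Z s = countGe (Z.erase z) s + if s ≤ z then 1 else 0 := fun s => by
    rw [← countGe_insert (notMem_erase z Z), insert_erase hzZ]
  have below : ∀ s ≤ z, countGe B s + 1 ≤ countGe Z s := fun s hs => by
    have := hZ s
    have := hBZ' s
    rw [if_pos hs] at *
    omega
  intro t
  rw [countGe_insert hyB]
  split_ifs with hty
  · rcases le_or_gt t z with htz | hzt
    · exact below t htz
    · -- the elements of `Z` in `[γ, t)` lie in `B`, because `y` is the least candidate `≥ γ`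
      have hgap := countGe_add_countGe_le (E := Z) (F := B) (hγz.trans hzt.le)
        fun x hxZ hγx hxt => by
          by_contra hxB
          have := hy x (hZY hxZ) hxB hγx
          omega
      have := below γ hγz
      omega
  · have := hZ t
    have := hBZ' t
    split_ifs at * <;> omega

end Greedy

def LiftInvariant (Y A B : Finset ℕ) : Prop :=
  A.card = B.card ∧ GaleLE A B ∧ ∀ x ∈ B, x ∉ Y → countGe B x ≤ countGe A x

section Subroutine

variable {Y A B : Finset ℕ} {γ q : ℕ}

lemma le_countLt_nth_of_subroutine (hqB : q ≤ B.card + 1)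
    (hq : q = 1 ∨ nth B (q - 1) < nth (insert γ A) q) :
    q - 1 ≤ countLt B (nth (insert γ A) q) := by
  by_cases hq1 : q ≤ 1
  · omega
  rcases hq with rfl | hq
  · omega
  exact (nth_lt_iff_le_countLt (by omega) (by omega)).1 hq

lemma nth_subroutine_le (hcard : A.card = B.card) (hAB : GaleLE A B) (hγ : γ ∉ A)
    (hq1 : 1 ≤ q) (hqA : q ≤ A.card + 1) (hq : q = 1 ∨ nth B (q - 1) < nth (insert γ A) q) :
    nth (insert γ A) q ≤ γ := by
  by_contra! hlt
  have hu := countLt_nth (E := insert γ A) hq1 (by rw [card_insert_of_notMem hγ]; exact hqA)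
  rw [countLt_insert hγ, if_pos hlt] at hu
  have := (galeLE_iff_countLt hcard).1 hAB (nth (insert γ A) q)
  have := le_countLt_nth_of_subroutine (by omega) hq
  omega

lemma nth_subroutine_notMem (hcard : A.card = B.card) (hγ : γ ∉ A) (hq1 : 1 ≤ q)
    (hqA : q ≤ A.card + 1) (hq : q = 1 ∨ nth B (q - 1) < nth (insert γ A) q)
    (hr : ∀ r, q < r → r ≤ A.card + 1 → nth (insert γ A) r ≤ nth B (r - 1)) :
    nth (insert γ A) q ∉ B := by
  intro ha
  have hA' : (insert γ A).card = A.card + 1 := card_insert_of_notMem hγ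
  have hqk := le_countLt_nth_of_subroutine (by omega) hq
  set a := nth (insert γ A) q
  have hkB : countLt B a < B.card := by
    have := countGe_add_countLt B a
    have : 0 < countGe B a := card_pos.2 ⟨a, mem_filter.2 ⟨ha, le_rfl⟩⟩
    omega
  set k := countLt B a + 1
  have hle := hr (k + 1) (by omega) (by omega)
  rw [Nat.add_sub_cancel] at hle
  have hBk : nth B k < a + 1 :=
    (nth_lt_iff_le_countLt (by omega) (by omega)).2 (countLt_succ_of_mem ha).ge
  have hAk : ¬ nth (insert γ A) (k + 1) < a + 1 := by
    rw [nth_lt_iff_le_countLt (by omega) (by omega), countLt_nth_succ hq1 (by omega)]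
    omega
  omega

lemma galeLE_insert_nth_subroutine (hcard : A.card = B.card) (hAB : GaleLE A B) (hγ : γ ∉ A)
    (hq1 : 1 ≤ q) (hqA : q ≤ A.card + 1)
    (hr : ∀ r, q < r → r ≤ A.card + 1 → nth (insert γ A) r ≤ nth B (r - 1))
    (ha : nth (insert γ A) q ∉ B) :
    GaleLE (insert γ A) (insert (nth (insert γ A) q) B) := by
  intro t
  have hA' : (insert γ A).card = A.card + 1 := card_insert_of_notMem hγ
  rw [countGe_insert ha]
  split_ifs with hta
  · have := countGe_insert hγ t
    have := hAB t
    split_ifs at * <;> omega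
  set c := countLt (insert γ A) t
  have hqc : q ≤ c := by
    rw [← countLt_nth_succ (E := insert γ A) hq1 (by omega)]
    exact countLt_mono _ (by omega)
  have e1 := countGe_add_countLt (insert γ A) t
  have e2 := countGe_add_countLt B t
  rcases Nat.lt_or_ge c (insert γ A).card with hc | hc
  · have htc : t ≤ nth (insert γ A) (c + 1) := by
      by_contra! hlt
      have := (nth_lt_iff_le_countLt (by omega) (by omega)).1 hlt
      omega
    have hle := hr (c + 1) (by omega) (by omega)
    rw [Nat.add_sub_cancel] at hle
    have : ¬ c ≤ countLt B t := by
      rw [← nth_lt_iff_le_countLt (by omega) (by omega)]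
      omega
    omega
  · omega

lemma countGe_insert_nth_subroutine_le (hcard : A.card = B.card) (hγ : γ ∉ A) (hq1 : 1 ≤ q)
    (hqA : q ≤ A.card + 1) (hq : q = 1 ∨ nth B (q - 1) < nth (insert γ A) q)
    (ha : nth (insert γ A) q ∉ B) :
    countGe (insert (nth (insert γ A) q) B) (nth (insert γ A) q) ≤
      countGe (insert γ A) (nth (insert γ A) q) := by
  have hA' : (insert γ A).card = A.card + 1 := card_insert_of_notMem hγ
  rw [countGe_insert ha, if_pos le_rfl]
  have := countLt_nth (E := insert γ A) hq1 (by omega)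
  have := le_countLt_nth_of_subroutine (by omega) hq
  have := countGe_add_countLt (insert γ A) (nth (insert γ A) q)
  have := countGe_add_countLt B (nth (insert γ A) q)
  omega

lemma LiftInvariant.insert_nth_subroutine (h : LiftInvariant Y A B) (hγ : γ ∉ A) (hq1 : 1 ≤ q)
    (hqA : q ≤ A.card + 1) (hq : q = 1 ∨ nth B (q - 1) < nth (insert γ A) q)
    (hr : ∀ r, q < r → r ≤ A.card + 1 → nth (insert γ A) r ≤ nth B (r - 1)) :
    LiftInvariant Y (insert γ A) (insert (nth (insert γ A) q) B) := by
  obtain ⟨hcard, hAB, hout⟩ := h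
  have ha := nth_subroutine_notMem hcard hγ hq1 hqA hq hr
  refine ⟨by rw [card_insert_of_notMem hγ, card_insert_of_notMem ha, hcard],
    galeLE_insert_nth_subroutine hcard hAB hγ hq1 hqA hr ha, fun x hx hxY => ?_⟩
  rcases mem_insert.1 hx with rfl | hxB
  · exact countGe_insert_nth_subroutine_le hcard hγ hq1 hqA hq ha
  · exact countGe_insert_le_insert ha hγ (nth_subroutine_le hcard hAB hγ hq1 hqA hq)
      (hout x hxB hxY)

end Subroutine

lemma galeLE_of_forall_notMem_countGe_le {Y A B Z : Finset ℕ}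
    (hout : ∀ x ∈ B, x ∉ Y → countGe B x ≤ countGe A x) (hYZ : Y ⊆ Z) (hAZ : GaleLE A Z) :
    GaleLE B Z := by
  intro t
  by_cases h : ∃ x, x ∈ B ∧ x ∉ Y ∧ t ≤ x
  · obtain ⟨hB, hY, ht⟩ := Nat.find_spec h
    have hgap := countGe_add_countGe_le (E := B) (F := Z) ht fun x hxB htx hxt =>
      hYZ (by_contra fun hxY => Nat.find_min h hxt ⟨hxB, hxY, htx⟩)
    have := hout _ hB hY
    have := hAZ (Nat.find h)
    omega
  · refine card_le_card fun x hx => ?_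
    rw [mem_filter] at hx ⊢
    exact ⟨hYZ (by_contra fun hxY => h ⟨x, hx.1, hxY, hx.2⟩), hx.2⟩

def prefixSet (v : ℕ → ℕ) (j : ℕ) : Finset ℕ := (Icc 1 j).image v

section Prefix

variable {n j : ℕ} {v : ℕ → ℕ}

lemma prefixSet_zero (v : ℕ → ℕ) : prefixSet v 0 = ∅ := by
  simp [prefixSet]

lemma prefixSet_succ (v : ℕ → ℕ) (j : ℕ) :
    prefixSet v (j + 1) = insert (v (j + 1)) (prefixSet v j) := by
  rw [prefixSet, prefixSet, ← image_insert]
  congr 1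
  ext x
  simp only [mem_Icc, mem_insert]
  omega

lemma prefixSet_mono (v : ℕ → ℕ) {j j' : ℕ} (h : j ≤ j') : prefixSet v j ⊆ prefixSet v j' :=
  image_subset_image (Icc_subset_Icc_right h)

lemma card_prefixSet (hv : Set.InjOn v (Set.Icc 1 n)) (hj : j ≤ n) : (prefixSet v j).card = j := by
  rw [prefixSet, card_image_of_injOn (by rw [coe_Icc]; exact hv.mono (Set.Icc_subset_Icc_right hj)),
    Nat.card_Icc, Nat.add_sub_cancel]

lemma apply_notMem_prefixSet (hv : Set.InjOn v (Set.Icc 1 n)) (hj : j + 1 ≤ n) :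
    v (j + 1) ∉ prefixSet v j := by
  simp only [prefixSet, mem_image, mem_Icc, not_exists, not_and]
  intro i hi heq
  have := hv ⟨hi.1, by omega⟩ ⟨by omega, hj⟩ heq
  omega

end Prefix

namespace MinLift

variable {n p j : ℕ} {Y : Finset ℕ} {w ξ : ℕ → ℕ}

lemma greedy_choice (hξ : MinLift n p Y w ξ) (hj : j + 1 ≤ p) :
    ξ (j + 1) ∈ Y ∧ ξ (j + 1) ∉ prefixSet ξ j ∧ w (j + 1) ≤ ξ (j + 1) ∧
      ∀ z ∈ Y, z ∉ prefixSet ξ j → w (j + 1) ≤ z → ξ (j + 1) ≤ z := by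
  have hmin := hξ.1 (j + 1) (by omega) hj
  rw [Nat.add_sub_cancel] at hmin
  change ((Y \ prefixSet ξ j).filter (w (j + 1) ≤ ·)).min = _ at hmin
  have hmem := mem_of_min hmin
  rw [Nat.cast_id, mem_filter, mem_sdiff] at hmem
  refine ⟨hmem.1.1, hmem.1.2, hmem.2, fun z hzY hzX hwz => ?_⟩
  have := min_le (mem_filter.2 ⟨mem_sdiff.2 ⟨hzY, hzX⟩, hwz⟩)
  rw [hmin] at this
  simpa using this

lemma subroutine_choice (hξ : MinLift n p Y w ξ) (hpj : p ≤ j) (hjn : j + 1 ≤ n) :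
    ∃ q, 1 ≤ q ∧ q ≤ j + 1 ∧
      (q = 1 ∨ nth (prefixSet ξ j) (q - 1) < nth (prefixSet w (j + 1)) q) ∧
      (∀ r, q < r → r ≤ j + 1 → nth (prefixSet w (j + 1)) r ≤ nth (prefixSet ξ j) (r - 1)) ∧
      ξ (j + 1) = nth (prefixSet w (j + 1)) q := by
  simpa only [Nat.add_sub_cancel, gt_iff_lt, prefixSet] using hξ.2 (j + 1) (by omega) hjn

lemma greedy_phase (hw : Set.InjOn w (Set.Icc 1 n)) (hp : p ≤ n) (hξ : MinLift n p Y w ξ) :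
    ∀ j ≤ p, prefixSet ξ j ⊆ Y ∧ (prefixSet w j).card = (prefixSet ξ j).card ∧
      GaleLE (prefixSet w j) (prefixSet ξ j) ∧
      ∀ Z ⊆ Y, GaleLE (prefixSet w j) Z → GaleLE (prefixSet ξ j) Z := by
  intro j
  induction j with
  | zero => simp [prefixSet_zero, GaleLE, countGe]
  | succ j ih =>
    intro hj
    obtain ⟨hXY, hcard, hWX, hmin⟩ := ih (by omega)
    obtain ⟨hyY, hyX, hwy, hy⟩ := hξ.greedy_choice hj
    have hγ := apply_notMem_prefixSet hw (by omega : j + 1 ≤ n)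
    rw [prefixSet_succ w, prefixSet_succ ξ]
    exact ⟨insert_subset hyY hXY,
      by rw [card_insert_of_notMem hγ, card_insert_of_notMem hyX, hcard],
      fun t => countGe_insert_le_insert hγ hyX hwy (hWX t),
      fun Z hZY => galeLE_insert_of_forall_le hZY hγ hyX hy hmin⟩

lemma subroutine_phase (hw : Set.InjOn w (Set.Icc 1 n)) (hp : p ≤ n) (hξ : MinLift n p Y w ξ)
    (hpj : p ≤ j) (hjn : j ≤ n) : LiftInvariant Y (prefixSet w j) (prefixSet ξ j) := by
  induction j, hpj using Nat.le_induction with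
  | base =>
    obtain ⟨hXY, hcard, hWX, -⟩ := hξ.greedy_phase hw hp p le_rfl
    exact ⟨hcard, hWX, fun x hx hxY => absurd (hXY hx) hxY⟩
  | succ j hpj ih =>
    obtain ⟨q, hq1, hqj, hq, hr, hξq⟩ := hξ.subroutine_choice hpj hjn
    have hγ := apply_notMem_prefixSet hw hjn
    have hA : (prefixSet w j).card = j := card_prefixSet hw (by omega)
    rw [prefixSet_succ w] at hq hr hξq
    rw [prefixSet_succ w, prefixSet_succ ξ, hξq]
    exact (ih (by omega)).insert_nth_subroutine hγ hq1 (by omega) hq (by rwa [hA])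

lemma galeLE_prefixSet (hw : Set.InjOn w (Set.Icc 1 n)) (hp : p ≤ n) (hξ : MinLift n p Y w ξ)
    {i : ℕ} (hi : i ≤ n) :
    (prefixSet w i).card = (prefixSet ξ i).card ∧ GaleLE (prefixSet w i) (prefixSet ξ i) := by
  rcases le_total i p with hip | hpi
  · obtain ⟨-, hcard, hWX, -⟩ := hξ.greedy_phase hw hp i hip
    exact ⟨hcard, hWX⟩
  · obtain ⟨hcard, hWX, -⟩ := hξ.subroutine_phase hw hp hpi hi
    exact ⟨hcard, hWX⟩

lemma galeLE_of_prefixSet_eq (hw : Set.InjOn w (Set.Icc 1 n)) (hp : p ≤ n)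
    (hξ : MinLift n p Y w ξ) {v : ℕ → ℕ} (hv : prefixSet v p = Y) {i : ℕ} (hi : i ≤ n)
    (h : GaleLE (prefixSet w i) (prefixSet v i)) : GaleLE (prefixSet ξ i) (prefixSet v i) := by
  rcases le_total i p with hip | hpi
  · exact (hξ.greedy_phase hw hp i hip).2.2.2 _ (hv ▸ prefixSet_mono v hip) h
  · exact galeLE_of_forall_notMem_countGe_le (hξ.subroutine_phase hw hp hpi hi).2.2
      (hv ▸ prefixSet_mono v hpi) h

lemma prefixSet_eq (hw : Set.InjOn w (Set.Icc 1 n)) (hp : p ≤ n) (hξ : MinLift n p Y w ξ)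
    (hYc : Y.card = p) : prefixSet ξ p = Y := by
  obtain ⟨hXY, hcard, -, -⟩ := hξ.greedy_phase hw hp p le_rfl
  exact eq_of_subset_of_card_le hXY (by rw [← hcard, card_prefixSet hw hp, hYc])

lemma bruhat (hw : Set.InjOn w (Set.Icc 1 n)) (hp : p ≤ n) (hξ : MinLift n p Y w ξ) :
    Bruhat n w ξ := fun _ hi =>
  let ⟨hcard, hWX⟩ := hξ.galeLE_prefixSet hw hp hi
  (dom_iff_galeLE hcard).2 hWX

lemma bruhat_of_bruhat (hw : Set.InjOn w (Set.Icc 1 n)) (hp : p ≤ n) (hξ : MinLift n p Y w ξ)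
    {v : ℕ → ℕ} (hv : prefixSet v p = Y) (hwv : Bruhat n w v) : Bruhat n ξ v := fun i hi => by
  have hWV : Dom (prefixSet w i) (prefixSet v i) := hwv i hi
  have hcard := hWV.card_eq
  have hWX := (hξ.galeLE_prefixSet hw hp hi).1
  exact (dom_iff_galeLE (hWX.symm.trans hcard)).2
    (hξ.galeLE_of_prefixSet_eq hw hp hv hi ((dom_iff_galeLE hcard).1 hWV))

end MinLift

theorem stmt19_general (n p : ℕ) (hp : p ≤ n) (w ξ : ℕ → ℕ)
    (hw : Set.BijOn w (Set.Icc 1 n) (Set.Icc 1 n))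
    (Y : Finset ℕ) (hYc : Y.card = p)
    (hξ : MinLift n p Y w ξ) :
    (Finset.Icc 1 p).image ξ = Y ∧
    Bruhat n w ξ ∧
    (∀ v : ℕ → ℕ, Set.BijOn v (Set.Icc 1 n) (Set.Icc 1 n) →
      (Finset.Icc 1 p).image v = Y → ¬ Bruhat n ξ v → ¬ Bruhat n w v) ∧
    (∀ v : ℕ → ℕ, Set.BijOn v (Set.Icc 1 n) (Set.Icc 1 n) →
      (Finset.Icc 1 p).image v = Y → Bruhat n w v → Bruhat n ξ v) := by
  have hmin : ∀ v : ℕ → ℕ, Set.BijOn v (Set.Icc 1 n) (Set.Icc 1 n) →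
      (Finset.Icc 1 p).image v = Y → Bruhat n w v → Bruhat n ξ v :=
    fun _ _ hv => hξ.bruhat_of_bruhat hw.injOn hp hv
  exact ⟨hξ.prefixSet_eq hw.injOn hp hYc, hξ.bruhat hw.injOn hp,
    fun v hv hvY hξv hwv => hξv (hmin v hv hvY hwv), hmin⟩

theorem stmt19 (n p : ℕ) (hp : p ≤ n) (w ξ : ℕ → ℕ)
    (hw : Set.BijOn w (Set.Icc 1 n) (Set.Icc 1 n))
    (Y : Finset ℕ) (hYs : Y ⊆ Finset.Icc 1 n) (hYc : Y.card = p)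
    (hdom : Dom ((Finset.Icc 1 p).image w) Y)
    (hξ : MinLift n p Y w ξ) :
    (Finset.Icc 1 p).image ξ = Y ∧
    Bruhat n w ξ ∧
    (∀ v : ℕ → ℕ, Set.BijOn v (Set.Icc 1 n) (Set.Icc 1 n) →
      (Finset.Icc 1 p).image v = Y → ¬ Bruhat n ξ v → ¬ Bruhat n w v) ∧
    (∀ v : ℕ → ℕ, Set.BijOn v (Set.Icc 1 n) (Set.Icc 1 n) →
      (Finset.Icc 1 p).image v = Y → Bruhat n w v → Bruhat n ξ v) :=
  stmt19_general n p hp w ξ hw Y hYc hξ
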